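/- Let X and Y be geodesic metric spaces, let Y be δ-thin-hyperbolic, and let f: X → Y be a (λ,S)-quasi-isometric embedding, i.e., λ^{-1}·d_X(x,x') − S ≤ d_Y(f(x), f(x')) ≤ λ·d_X(x,x') + S for all x, x' ∈ X, where λ ≥ 1 and S ≥ 0. Then there exists δ' ≥ 0 depending only on δ, λ and S such that X is δ'-thin-hyperbolic. In particular, Gromov hyperbolicity of geodesic metric spaces is invariant under quasi-isometries. -/

import Mathlib

/-- `γ` is a geodesic segment from `x` to `y`, parametrized by arclength on `[0, dist x y]`. -/
def IsGeodesicSegment {X : Type*} [MetricSpace X] (γ : ℝ → X) (x y : X) : Prop :=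
  γ 0 = x ∧ γ (dist x y) = y ∧
    ∀ s ∈ Set.Icc (0 : ℝ) (dist x y), ∀ t ∈ Set.Icc (0 : ℝ) (dist x y),
      dist (γ s) (γ t) = |s - t|

/-- A metric space is geodesic if any two points are joined by a geodesic segment. -/
def GeodesicSpace (X : Type*) [MetricSpace X] : Prop :=
  ∀ x y : X, ∃ γ : ℝ → X, IsGeodesicSegment γ x y

/-- `X` is `δ`-thin-hyperbolic: for every geodesic triangle, each point on any one of the
three sides lies within distance `δ` of the union of the other two sides. -/
def ThinTriangles (X : Type*) [MetricSpace X] (δ : ℝ) : Prop :=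
  ∀ (a b c : X) (γab γbc γca : ℝ → X),
    IsGeodesicSegment γab a b → IsGeodesicSegment γbc b c → IsGeodesicSegment γca c a →
    (∀ s ∈ Set.Icc (0 : ℝ) (dist a b),
      Metric.infDist (γab s) (γbc '' Set.Icc 0 (dist b c) ∪ γca '' Set.Icc 0 (dist c a)) ≤ δ) ∧
    (∀ s ∈ Set.Icc (0 : ℝ) (dist b c),
      Metric.infDist (γbc s) (γab '' Set.Icc 0 (dist a b) ∪ γca '' Set.Icc 0 (dist c a)) ≤ δ) ∧
    (∀ s ∈ Set.Icc (0 : ℝ) (dist c a),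
      Metric.infDist (γca s) (γab '' Set.Icc 0 (dist a b) ∪ γbc '' Set.Icc 0 (dist b c)) ≤ δ)


/-!
The image under `f` of a geodesic of `X` is a quasi-geodesic of `Y`, and the Morse lemma puts it
within bounded Hausdorff distance of a geodesic of `Y` with the same endpoints; thinness of the
geodesic triangle of `Y` then pulls back along `f`.

The Morse lemma is proved for a discretisation `c` of the quasi-geodesic, as in Bridson–Haefliger
III.H.1.7. Halving with thin triangles shows that a geodesic spanned by a `K`-coarse path of
`n ≤ 2 ^ j` steps lies within `δ j + K` of it. If `g t₀` is a point of the geodesic `g` at maximal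
distance `D` from `c`, the detour that leaves `g` at distance `2 D` before `g t₀`, runs to `c`,
along `c`, and back to `g` at distance `2 D` after `g t₀` has `O(D)` steps and stays `D`-far
from `g t₀`; so `D ≤ δ log₂ O(D) + K`, which bounds `D`.
-/

open Metric Set

theorem Metric.infDist_le_add_of_forall_infDist_le {α : Type*} [PseudoMetricSpace α]
    {x : α} {U E : Set α} {a b : ℝ} (hU : U.Nonempty) (hx : infDist x U ≤ a)
    (hE : ∀ u ∈ U, infDist u E ≤ b) : infDist x E ≤ a + b := by
  refine le_of_forall_pos_le_add fun ε hε => ?_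
  obtain ⟨u, hu, hxu⟩ := (infDist_lt_iff hU).mp (hx.trans_lt (lt_add_of_pos_right a hε))
  linarith [infDist_le_infDist_add_dist (x := x) (y := u) (s := E), hE u hu]

theorem sq_le_two_pow_succ : ∀ n : ℕ, n ^ 2 ≤ 2 ^ (n + 1)
  | 0 | 1 | 2 | 3 => by norm_num
  | n + 4 => by
    have ih : (n + 3) ^ 2 ≤ 2 ^ (n + 4) := sq_le_two_pow_succ (n + 3)
    have : (n + 4) ^ 2 ≤ 2 * (n + 3) ^ 2 := by ring_nf; omega
    rw [pow_succ 2 (n + 4)]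
    omega

theorem two_pow_log_add_one_le (M : ℕ) : 2 ^ (Nat.log 2 M + 1) ≤ 2 * M + 2 := by
  rcases eq_or_ne M 0 with rfl | hM
  · simp
  · linarith [pow_succ 2 (Nat.log 2 M), Nat.pow_log_le_self 2 hM]

theorem natCast_le_of_two_pow_le {j : ℕ} {a b : ℝ} (ha : 0 ≤ a) (hb : 0 ≤ b)
    (h : (2 : ℝ) ^ j ≤ a * j + b) : (j : ℝ) ≤ 2 * a + √(2 * b) := by
  have hsq : (j : ℝ) ^ 2 ≤ 2 * a * j + 2 * b := by
    have : ((j ^ 2 : ℕ) : ℝ) ≤ ((2 ^ (j + 1) : ℕ) : ℝ) := by exact_mod_cast sq_le_two_pow_succ j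
    push_cast at this
    linarith [pow_succ (2 : ℝ) j]
  by_contra! hlt
  have h2b := Real.sq_sqrt (by positivity : 0 ≤ 2 * b)
  nlinarith [Real.sqrt_nonneg (2 * b)]

theorem exists_abs_sub_le_of_abs_sub_succ_le (u : ℕ → ℝ) {W x : ℝ} :
    ∀ {R : ℕ}, (∀ r < R, |u (r + 1) - u r| ≤ W) → u 0 - W ≤ x → x ≤ u R + W →
      ∃ r ≤ R, |u r - x| ≤ W
  | 0, _, h₀, h₁ => ⟨0, le_rfl, abs_sub_le_iff.mpr ⟨by linarith, by linarith⟩⟩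
  | R + 1, hu, h₀, h₁ => by
    by_cases hx : x ≤ u R + W
    · obtain ⟨r, hr, hrx⟩ :=
        exists_abs_sub_le_of_abs_sub_succ_le u (fun r hr => hu r (by omega)) h₀ hx
      exact ⟨r, by omega, hrx⟩
    · have := abs_sub_le_iff.mp (hu R (by omega))
      exact ⟨R + 1, le_rfl, abs_sub_le_iff.mpr ⟨by linarith, by linarith⟩⟩

section

variable {Y : Type*} [MetricSpace Y]

def IsCoarsePath (K : ℝ) (n : ℕ) (e : ℕ → Y) : Prop :=
  ∀ k < n, dist (e k) (e (k + 1)) ≤ K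

namespace IsCoarsePath

variable {K : ℝ} {n : ℕ} {e : ℕ → Y}

theorem mono (he : IsCoarsePath K n e) {m : ℕ} (hmn : m ≤ n) : IsCoarsePath K m e :=
  fun k hk => he k (hk.trans_le hmn)

theorem shift (he : IsCoarsePath K n e) (m : ℕ) : IsCoarsePath K (n - m) (fun k => e (m + k)) :=
  fun k hk => he (m + k) (by omega)

theorem reverse (he : IsCoarsePath K n e) : IsCoarsePath K n (fun k => e (n - k)) :=
  fun k hk => by
    show dist (e (n - k)) (e (n - (k + 1))) ≤ K
    rw [dist_comm, show n - k = n - (k + 1) + 1 by omega]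
    exact he _ (by omega)

theorem dist_le (he : IsCoarsePath K n e) {i j : ℕ} (hi : i ≤ n) (hj : j ≤ n) :
    dist (e i) (e j) ≤ K * |(i : ℝ) - j| := by
  wlog hij : i ≤ j generalizing i j
  · rw [dist_comm, abs_sub_comm]
    exact this hj hi (by omega)
  rw [abs_sub_comm, abs_of_nonneg (sub_nonneg.mpr (by exact_mod_cast hij))]
  induction j, hij using Nat.le_induction with
  | base => simp
  | succ j hij ih =>
    calc dist (e i) (e (j + 1)) ≤ dist (e i) (e j) + dist (e j) (e (j + 1)) := dist_triangle ..
      _ ≤ K * (j - i) + K := add_le_add (ih (by omega)) (he j (by omega))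
      _ = K * ((j + 1 : ℕ) - i) := by push_cast; ring

theorem append {n₁ n₂ : ℕ} {e₁ e₂ : ℕ → Y} {P : Set Y} (h₁ : IsCoarsePath K n₁ e₁)
    (h₂ : IsCoarsePath K n₂ e₂) (h : e₁ n₁ = e₂ 0) (hP₁ : MapsTo e₁ (Iic n₁) P)
    (hP₂ : MapsTo e₂ (Iic n₂) P) :
    ∃ e, IsCoarsePath K (n₁ + n₂) e ∧ e 0 = e₁ 0 ∧ e (n₁ + n₂) = e₂ n₂ ∧
      MapsTo e (Iic (n₁ + n₂)) P := by
  set e := fun k => if k ≤ n₁ then e₁ k else e₂ (k - n₁)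
  have he₂ : ∀ k, n₁ ≤ k → e k = e₂ (k - n₁) := fun k hk => by
    rcases hk.eq_or_lt with rfl | hk
    · simp [e, h]
    · simp [e, hk.not_ge]
  refine ⟨e, fun k hk => ?_, by simp [e], by simp [he₂], fun k hk => ?_⟩
  · by_cases hk₁ : k < n₁
    · simpa [e, hk₁.le, Nat.succ_le_of_lt hk₁] using h₁ k hk₁
    · rw [he₂ k (by omega), he₂ (k + 1) (by omega), show k + 1 - n₁ = k - n₁ + 1 by omega]
      exact h₂ _ (by omega)
  · by_cases hk₁ : k ≤ n₁
    · simpa [e, hk₁] using hP₁ (mem_Iic.mpr hk₁)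
    · rw [he₂ k (by omega)]
      exact hP₂ (mem_Iic.mpr (by rw [mem_Iic] at hk; omega))

theorem exists_between (he : IsCoarsePath K n e) {i j : ℕ} (hi : i ≤ n) (hj : j ≤ n) :
    ∃ m e', IsCoarsePath K m e' ∧ e' 0 = e i ∧ e' m = e j ∧ (m : ℝ) = |(i : ℝ) - j| ∧
      MapsTo e' (Iic m) (e '' Iic n) := by
  wlog hij : i ≤ j generalizing i j
  · obtain ⟨m, e', he', h0, hm, hmij, hP⟩ := this hj hi (by omega)
    exact ⟨m, fun k => e' (m - k), he'.reverse, by simpa using hm, by simpa using h0,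
      by rw [hmij, abs_sub_comm], fun k _ => hP (mem_Iic.mpr (Nat.sub_le m k))⟩
  refine ⟨j - i, fun k => e (i + k), (he.shift i).mono (by omega), by simp,
    by simp [Nat.add_sub_cancel' hij], ?_, fun k hk => ⟨i + k, mem_Iic.mpr ?_, rfl⟩⟩
  · rw [Nat.cast_sub hij, abs_sub_comm, abs_of_nonneg (sub_nonneg.mpr (by exact_mod_cast hij))]
  · rw [mem_Iic] at hk; omega

end IsCoarsePath

theorem nonempty_image_Icc_dist {Z : Type*} [MetricSpace Z] (γ : ℝ → Z) (x y : Z) :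
    (γ '' Icc 0 (dist x y)).Nonempty :=
  (nonempty_Icc.mpr dist_nonneg).image γ

namespace IsGeodesicSegment

variable {γ : ℝ → Y} {x y : Y}

theorem dist_apply_left (hγ : IsGeodesicSegment γ x y) {s : ℝ} (hs : s ∈ Icc 0 (dist x y)) :
    dist (γ s) x = s := by
  rw [← hγ.1, hγ.2.2 s hs 0 ⟨le_rfl, dist_nonneg⟩, sub_zero, abs_of_nonneg hs.1]

theorem reverse (hγ : IsGeodesicSegment γ x y) :
    IsGeodesicSegment (fun t => γ (dist x y - t)) y x := by
  refine ⟨by simpa using hγ.2.1, by simp [dist_comm y x, hγ.1], fun s hs t ht => ?_⟩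
  rw [dist_comm y x] at hs ht
  rw [hγ.2.2 _ ⟨by linarith [hs.2], by linarith [hs.1]⟩ _ ⟨by linarith [ht.2], by linarith [ht.1]⟩,
    abs_sub_comm]
  ring_nf

theorem restrict (hγ : IsGeodesicSegment γ x y) {s₁ s₂ : ℝ} (h₁ : 0 ≤ s₁) (h₁₂ : s₁ ≤ s₂)
    (h₂ : s₂ ≤ dist x y) : IsGeodesicSegment (fun t => γ (s₁ + t)) (γ s₁) (γ s₂) := by
  have hd : dist (γ s₁) (γ s₂) = s₂ - s₁ := by
    rw [hγ.2.2 _ ⟨h₁, h₁₂.trans h₂⟩ _ ⟨h₁.trans h₁₂, h₂⟩, abs_sub_comm,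
      abs_of_nonneg (by linarith)]
  refine ⟨by simp, by simp [hd], fun s hs t ht => ?_⟩
  rw [hd] at hs ht
  rw [hγ.2.2 _ ⟨by linarith [hs.1], by linarith [hs.2]⟩ _ ⟨by linarith [ht.1], by linarith [ht.2]⟩]
  ring_nf

theorem continuousOn (hγ : IsGeodesicSegment γ x y) : ContinuousOn γ (Icc 0 (dist x y)) :=
  (LipschitzOnWith.of_dist_le_mul (K := 1) fun s hs t ht => by
    simp [hγ.2.2 s hs t ht, Real.dist_eq]).continuousOn

theorem exists_isCoarsePath (hγ : IsGeodesicSegment γ x y) {K : ℝ} (hK : 0 < K) :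
    ∃ n e, IsCoarsePath K n e ∧ e 0 = x ∧ e n = y ∧ (n : ℝ) ≤ dist x y / K + 1 ∧
      MapsTo e (Iic n) (γ '' Icc 0 (dist x y)) := by
  have hmem : ∀ k : ℕ, min (k * K) (dist x y) ∈ Icc 0 (dist x y) := fun k =>
    ⟨le_min (by positivity) dist_nonneg, min_le_right _ _⟩
  have hn : dist x y ≤ ⌈dist x y / K⌉₊ * K := (div_le_iff₀ hK).mp (Nat.le_ceil _)
  refine ⟨⌈dist x y / K⌉₊, fun k => γ (min (k * K) (dist x y)), fun k _ => ?_,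
    by simp [hγ.1], by simp [min_eq_right hn, hγ.2.1],
    (Nat.ceil_lt_add_one (by positivity)).le, fun k _ => ⟨_, hmem k, rfl⟩⟩
  rw [hγ.2.2 _ (hmem k) _ (hmem (k + 1))]
  refine (abs_min_sub_min_le_max _ _ _ _).trans ?_
  simp [add_mul, abs_of_pos hK, hK.le]

end IsGeodesicSegment

theorem IsCoarsePath.infDist_le_of_le_one {K : ℝ} (hK : 0 ≤ K) {n : ℕ} {e : ℕ → Y}
    (hn : n ≤ 1) (he : IsCoarsePath K n e) {γ : ℝ → Y} (hγ : IsGeodesicSegment γ (e 0) (e n))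
    {t : ℝ} (ht : t ∈ Icc 0 (dist (e 0) (e n))) : infDist (γ t) (e '' Iic n) ≤ K :=
  calc infDist (γ t) (e '' Iic n) ≤ dist (γ t) (e 0) := infDist_le_dist_of_mem ⟨0, by simp, rfl⟩
    _ = t := hγ.dist_apply_left ht
    _ ≤ K := by
      interval_cases n
      · linarith [ht.2, dist_self (e 0)]
      · exact ht.2.trans (he 0 one_pos)

namespace ThinTriangles

variable {δ : ℝ}

theorem infDist_le_of_isGeodesicSegment (hthin : ThinTriangles Y δ) {x y z : Y}
    {γ γ₁ γ₂ : ℝ → Y} (hγ : IsGeodesicSegment γ x z) (h₁ : IsGeodesicSegment γ₁ x y)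
    (h₂ : IsGeodesicSegment γ₂ y z) {t : ℝ} (ht : t ∈ Icc 0 (dist x z)) :
    infDist (γ t) (γ₁ '' Icc 0 (dist x y) ∪ γ₂ '' Icc 0 (dist y z)) ≤ δ := by
  simpa using (hthin x y z γ₁ γ₂ _ h₁ h₂ hγ.reverse).2.2 (dist x z - t)
    (by rw [dist_comm z x]; exact ⟨by linarith [ht.2], by linarith [ht.1]⟩)

theorem infDist_le_of_isCoarsePath (hgeo : GeodesicSpace Y) (hthin : ThinTriangles Y δ)
    (hδ : 0 ≤ δ) {K : ℝ} (hK : 0 ≤ K) (j : ℕ) :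
    ∀ {n : ℕ} {e : ℕ → Y} {γ : ℝ → Y} {t : ℝ}, n ≤ 2 ^ j → IsCoarsePath K n e →
      IsGeodesicSegment γ (e 0) (e n) → t ∈ Icc 0 (dist (e 0) (e n)) →
      infDist (γ t) (e '' Iic n) ≤ δ * j + K := by
  induction j with
  | zero =>
    intro n e γ t hn he hγ ht
    simpa using he.infDist_le_of_le_one hK (by simpa using hn) hγ ht
  | succ j ih =>
    intro n e γ t hn he hγ ht
    by_cases hn₁ : n ≤ 1
    · have : 0 ≤ δ * (j + 1 : ℕ) := by positivity
      linarith [he.infDist_le_of_le_one hK hn₁ hγ ht]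
    set m := n / 2
    have hmn : m ≤ n := Nat.div_le_self n 2
    have hpow : 2 ^ (j + 1) = 2 * 2 ^ j := by ring
    obtain ⟨γ₁, hγ₁⟩ := hgeo (e 0) (e m)
    obtain ⟨γ₂, hγ₂⟩ := hgeo (e m) (e n)
    have hγ₂' : IsGeodesicSegment γ₂ (e (m + 0)) (e (m + (n - m))) := by
      rwa [Nat.add_zero, Nat.add_sub_cancel' hmn]
    refine (infDist_le_add_of_forall_infDist_le (b := δ * j + K)
      ((nonempty_image_Icc_dist γ₁ _ _).mono subset_union_left)
      (hthin.infDist_le_of_isGeodesicSegment hγ hγ₁ hγ₂ ht) ?_).trans_eq (by push_cast; ring)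
    rintro _ (⟨s, hs, rfl⟩ | ⟨s, hs, rfl⟩)
    · refine (infDist_le_infDist_of_subset (image_mono (Iic_subset_Iic.mpr hmn))
        ⟨e 0, 0, by simp, rfl⟩).trans ?_
      exact ih (by omega) (he.mono hmn) hγ₁ hs
    · have hsub : (fun k => e (m + k)) '' Iic (n - m) ⊆ e '' Iic n := by
        rintro _ ⟨k, hk, rfl⟩
        exact ⟨m + k, by rw [mem_Iic] at hk ⊢; omega, rfl⟩
      refine (infDist_le_infDist_of_subset hsub ⟨e m, 0, by simp, rfl⟩).trans ?_
      exact ih (by omega) (he.shift m) hγ₂' (by rwa [Nat.add_zero, Nat.add_sub_cancel' hmn])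

end ThinTriangles

theorem IsGeodesicSegment.exists_far_or_mem {γ : ℝ → Y} {x y : Y}
    (hγ : IsGeodesicSegment γ x y) {C : Set Y} (hx : x ∈ C) {t D : ℝ}
    (ht : t ∈ Icc 0 (dist x y)) (hD : 0 ≤ D) :
    ∃ s ∈ Icc 0 t, t - s ≤ 2 * D ∧ (2 * D ≤ dist (γ t) (γ s) ∨ γ s ∈ C) := by
  by_cases h : 2 * D ≤ t
  · refine ⟨t - 2 * D, ⟨by linarith, by linarith⟩, by linarith, Or.inl ?_⟩
    rw [hγ.2.2 t ht _ ⟨by linarith, by linarith [ht.2]⟩, sub_sub_cancel,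
      abs_of_nonneg (by linarith)]
  · exact ⟨0, ⟨le_rfl, ht.1⟩, by linarith, Or.inr (hγ.1 ▸ hx)⟩

theorem IsGeodesicSegment.exists_far_pair {γ : ℝ → Y} {x y : Y} (hγ : IsGeodesicSegment γ x y)
    {C : Set Y} (hx : x ∈ C) (hy : y ∈ C) {t D : ℝ} (ht : t ∈ Icc 0 (dist x y)) (hD : 0 ≤ D) :
    ∃ x₁ x₂, 0 ≤ x₁ ∧ x₁ ≤ t ∧ t ≤ x₂ ∧ x₂ ≤ dist x y ∧ x₂ - x₁ ≤ 4 * D ∧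
      (2 * D ≤ dist (γ t) (γ x₁) ∨ γ x₁ ∈ C) ∧ (2 * D ≤ dist (γ t) (γ x₂) ∨ γ x₂ ∈ C) := by
  obtain ⟨x₁, hx₁, hx₁t, hfar₁⟩ := hγ.exists_far_or_mem hx ht hD
  obtain ⟨s₂, hs₂, hs₂t, hfar₂⟩ := hγ.reverse.exists_far_or_mem hy (t := dist x y - t)
    (by rw [dist_comm]; exact ⟨by linarith [ht.2], by linarith [ht.1]⟩) hD
  simp only [sub_sub_cancel] at hfar₂
  exact ⟨x₁, dist x y - s₂, hx₁.1, hx₁.2, by linarith [hs₂.2], by linarith [hs₂.1],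
    by linarith, hfar₁, hfar₂⟩

theorem GeodesicSpace.exists_isCoarsePath_far (hgeo : GeodesicSpace Y) {K : ℝ} (hK : 0 < K)
    {C : Set Y} (hC : C.Finite) (hCne : C.Nonempty) {p z : Y} {D : ℝ} (hDp : D ≤ infDist p C)
    (hz : infDist z C ≤ D) (hpz : 2 * D ≤ dist p z ∨ z ∈ C) :
    ∃ y ∈ C, dist z y ≤ D ∧ ∃ n e, IsCoarsePath K n e ∧ e 0 = z ∧ e n = y ∧
      (n : ℝ) ≤ D / K + 1 ∧ MapsTo e (Iic n) {w | D ≤ dist p w} := by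
  obtain ⟨y, hy, hzy⟩ := hC.isCompact.exists_infDist_eq_dist hCne z
  obtain ⟨γ, hγ⟩ := hgeo z y
  obtain ⟨n, e, he, he0, hen, hn, hmaps⟩ := hγ.exists_isCoarsePath hK
  have hzyD : dist z y ≤ D := hzy ▸ hz
  refine ⟨y, hy, hzyD, n, e, he, he0, hen, hn.trans (by gcongr), hmaps.mono_right ?_⟩
  rintro _ ⟨s, hs, rfl⟩
  have hsz := hγ.dist_apply_left hs
  rcases hpz with hpz | hzC
  · show D ≤ dist p (γ s)
    linarith [dist_triangle p (γ s) z, hs.2]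
  · have hzy0 : dist z y = 0 := hzy ▸ infDist_zero_of_mem hzC
    have hγs : γ s = z := dist_eq_zero.mp (by linarith [hs.1, hs.2])
    exact hγs ▸ hDp.trans (infDist_le_dist_of_mem hzC)

def IsDiscreteQuasiGeodesic (K A B : ℝ) (N : ℕ) (c : ℕ → Y) : Prop :=
  IsCoarsePath K N c ∧ ∀ i ≤ N, ∀ j ≤ N, |(i : ℝ) - j| ≤ A * dist (c i) (c j) + B

section DiscreteMorse

variable {δ K A B : ℝ} {N : ℕ} {c : ℕ → Y} {g : ℝ → Y}

theorem IsDiscreteQuasiGeodesic.abs_sub_le_of_dist_le (hc : IsDiscreteQuasiGeodesic K A B N c)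
    (hA : 0 ≤ A) {i j : ℕ} (hi : i ≤ N) (hj : j ≤ N) {y : Y} {a b : ℝ} (ha : dist y (c i) ≤ a)
    (hb : dist y (c j) ≤ b) : |(i : ℝ) - j| ≤ A * (a + b) + B :=
  (hc.2 i hi j hj).trans (by gcongr; linarith [dist_triangle_left (c i) (c j) y])

theorem IsDiscreteQuasiGeodesic.exists_detour (hgeo : GeodesicSpace Y) (hK : 0 < K)
    (hA : 0 ≤ A) (hc : IsDiscreteQuasiGeodesic K A B N c)
    (hg : IsGeodesicSegment g (c 0) (c N)) {t₀ D : ℝ} (ht₀ : t₀ ∈ Icc 0 (dist (c 0) (c N)))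
    (hDp : D ≤ infDist (g t₀) (c '' Iic N))
    (hmax : ∀ u ∈ Icc 0 (dist (c 0) (c N)), infDist (g u) (c '' Iic N) ≤ D) :
    ∃ x₁ x₂ M e, 0 ≤ x₁ ∧ x₁ ≤ t₀ ∧ t₀ ≤ x₂ ∧ x₂ ≤ dist (c 0) (c N) ∧ IsCoarsePath K M e ∧
      e 0 = g x₁ ∧ e M = g x₂ ∧ (M : ℝ) ≤ 2 * (D / K + 1) + 6 * A * D + B ∧
      MapsTo e (Iic M) {w | D ≤ dist (g t₀) w} := by
  set C := c '' Iic N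
  have hC : C.Finite := (finite_Iic N).image c
  have hCne : C.Nonempty := ⟨c 0, 0, by simp, rfl⟩
  have hD : 0 ≤ D := infDist_nonneg.trans (hmax t₀ ht₀)
  have hfarC : C ⊆ {w | D ≤ dist (g t₀) w} := fun w hw => hDp.trans (infDist_le_dist_of_mem hw)
  obtain ⟨x₁, x₂, hx₁, hx₁t, hx₂t, hx₂, hx₁₂, hfar₁, hfar₂⟩ :=
    hg.exists_far_pair (C := C) ⟨0, by simp, rfl⟩ ⟨N, self_mem_Iic, rfl⟩ ht₀ hD
  obtain ⟨_, ⟨i, hi, rfl⟩, hi₁, n₁, e₁, he₁, he₁0, he₁n, hn₁, hP₁⟩ :=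
    hgeo.exists_isCoarsePath_far hK hC hCne hDp (hmax x₁ ⟨hx₁, hx₁t.trans ht₀.2⟩) hfar₁
  obtain ⟨_, ⟨j, hj, rfl⟩, hj₃, n₃, e₃, he₃, he₃0, he₃n, hn₃, hP₃⟩ :=
    hgeo.exists_isCoarsePath_far hK hC hCne hDp (hmax x₂ ⟨ht₀.1.trans hx₂t, hx₂⟩) hfar₂
  obtain ⟨n₂, e₂, he₂, he₂0, he₂n, hn₂, hP₂⟩ := hc.1.exists_between hi hj
  obtain ⟨e₁₂, he₁₂, he₁₂0, he₁₂n, hP₁₂⟩ :=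
    he₁.append he₂ (by rw [he₁n, he₂0]) hP₁ (hP₂.mono_right hfarC)
  obtain ⟨e, he, he0, hen, hP⟩ := he₁₂.append he₃.reverse (by simp [he₁₂n, he₂n, he₃n])
    hP₁₂ fun k _ => hP₃ (mem_Iic.mpr (Nat.sub_le n₃ k))
  have hg₁₂ : dist (g x₁) (g x₂) ≤ 4 * D := by
    rw [hg.2.2 _ ⟨hx₁, hx₁t.trans ht₀.2⟩ _ ⟨ht₀.1.trans hx₂t, hx₂⟩, abs_sub_comm,
      abs_of_nonneg (by linarith)]
    exact hx₁₂
  have hij := hc.abs_sub_le_of_dist_le hA hi hj hi₁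
    ((dist_triangle _ (g x₂) _).trans (add_le_add hg₁₂ hj₃))
  refine ⟨x₁, x₂, n₁ + n₂ + n₃, e, hx₁, hx₁t, hx₂t, hx₂, he, by rw [he0, he₁₂0, he₁0],
    by simp [hen, he₃0], by push_cast; nlinarith, hP⟩

/-- The bound on `D` forced by `D ≤ δ j + K` and `2 ^ j ≤ (4 / K + 12 A) D + 2 B + 6`, via
`j ^ 2 ≤ 2 ^ (j + 1)`. -/
noncomputable def coarseMorseBound (δ K A B : ℝ) : ℝ :=
  δ * (2 * ((4 / K + 12 * A) * δ) + √(2 * ((4 / K + 12 * A) * K + 2 * B + 6))) + K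

theorem ThinTriangles.infDist_le_coarseMorseBound (hgeo : GeodesicSpace Y)
    (hthin : ThinTriangles Y δ) (hδ : 0 ≤ δ) (hK : 0 < K) (hA : 0 ≤ A)
    (hc : IsDiscreteQuasiGeodesic K A B N c) (hg : IsGeodesicSegment g (c 0) (c N)) {u : ℝ}
    (hu : u ∈ Icc 0 (dist (c 0) (c N))) :
    infDist (g u) (c '' Iic N) ≤ coarseMorseBound δ K A B := by
  obtain ⟨t₀, ht₀, hmax⟩ := isCompact_Icc.exists_isMaxOn ⟨u, hu⟩
    ((continuous_infDist_pt (c '' Iic N)).comp_continuousOn hg.continuousOn)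
  set D := infDist (g t₀) (c '' Iic N)
  refine (hmax hu).trans ?_
  obtain ⟨x₁, x₂, M, e, hx₁, hx₁t, hx₂t, hx₂, he, he0, heM, hM, hfar⟩ :=
    hc.exists_detour hgeo hK hA hg ht₀ le_rfl fun v hv => hmax hv
  set j := Nat.log 2 M + 1
  have hDj : D ≤ δ * j + K := by
    have hγ := hg.restrict hx₁ (hx₁t.trans hx₂t) hx₂
    have hd : dist (g x₁) (g x₂) = x₂ - x₁ := by
      rw [hg.2.2 _ ⟨hx₁, by linarith⟩ _ ⟨by linarith, hx₂⟩, abs_sub_comm,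
        abs_of_nonneg (by linarith)]
    rw [← he0, ← heM] at hγ
    have := hthin.infDist_le_of_isCoarsePath hgeo hδ hK.le j
      (Nat.lt_pow_succ_log_self one_lt_two M).le he hγ (t := t₀ - x₁)
      (by rw [he0, heM, hd]; constructor <;> linarith)
    refine ((le_infDist (s := e '' Iic M) ⟨e 0, 0, by simp, rfl⟩).mpr ?_).trans
      (by simpa using this)
    rintro _ ⟨k, hk, rfl⟩
    exact hfar hk
  have hB : 0 ≤ B := by simpa using hc.2 0 N.zero_le 0 N.zero_le
  have hpow : (2 : ℝ) ^ j ≤ (4 / K + 12 * A) * δ * j + ((4 / K + 12 * A) * K + 2 * B + 6) :=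
    calc (2 : ℝ) ^ j ≤ 2 * M + 2 := by exact_mod_cast two_pow_log_add_one_le M
      _ ≤ (4 / K + 12 * A) * D + 2 * B + 6 := by
        have : (4 / K + 12 * A) * D = 4 * (D / K) + 12 * A * D := by ring
        linarith
      _ ≤ (4 / K + 12 * A) * (δ * j + K) + 2 * B + 6 := by gcongr
      _ = _ := by ring
  have hj := natCast_le_of_two_pow_le (by positivity) (by positivity) hpow
  calc D ≤ δ * j + K := hDj
    _ ≤ coarseMorseBound δ K A B := by unfold coarseMorseBound; gcongr

theorem ThinTriangles.exists_index_near (hgeo : GeodesicSpace Y) (hthin : ThinTriangles Y δ)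
    (hδ : 0 ≤ δ) (hK : 0 < K) (hA : 0 ≤ A) (hc : IsDiscreteQuasiGeodesic K A B N c)
    (hg : IsGeodesicSegment g (c 0) (c N)) {k : ℕ} (hk : k ≤ N) :
    ∃ u ∈ Icc 0 (dist (c 0) (c N)), ∃ i ≤ N, dist (g u) (c i) ≤ coarseMorseBound δ K A B ∧
      |(i : ℝ) - k| ≤ A * (2 * coarseMorseBound δ K A B + 1) + B := by
  set ℓ := dist (c 0) (c N)
  set D := coarseMorseBound δ K A B
  set W := A * (2 * D + 1) + B
  have hmem : ∀ r : ℕ, min (r : ℝ) ℓ ∈ Icc 0 ℓ := fun r =>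
    ⟨le_min r.cast_nonneg dist_nonneg, min_le_right _ _⟩
  have hnear : ∀ r : ℕ, ∃ i ≤ N, dist (g (min r ℓ)) (c i) ≤ D := fun r => by
    obtain ⟨_, ⟨i, hi, rfl⟩, hi'⟩ := ((finite_Iic N).image c).isCompact.exists_infDist_eq_dist
      ⟨c 0, 0, by simp, rfl⟩ (g (min r ℓ))
    exact ⟨i, hi, hi' ▸ hthin.infDist_le_coarseMorseBound hgeo hδ hK hA hc hg (hmem r)⟩
  choose σ hσN hσ using hnear
  -- `σ r` indexes a point of `c` near `g (min r ℓ)`; the indices move by at most `W` per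
  -- step and run from near `0` to near `N`, so some `σ r` is within `W` of `k`.
  have hW : A * (D + 0) + B ≤ W := by nlinarith [dist_nonneg.trans (hσ 0)]
  have hstep : ∀ r < ⌈ℓ⌉₊, |(σ (r + 1) : ℝ) - σ r| ≤ W := fun r _ => by
    have h₁ : dist (g (min r ℓ)) (g (min (r + 1 : ℕ) ℓ)) ≤ 1 := by
      rw [hg.2.2 _ (hmem r) _ (hmem (r + 1))]
      exact (abs_min_sub_min_le_max _ _ _ _).trans (by simp)
    refine (hc.abs_sub_le_of_dist_le hA (hσN (r + 1)) (hσN r) (a := 1 + D)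
      (by linarith [dist_triangle (g (min r ℓ)) (g (min (r + 1 : ℕ) ℓ)) (c (σ (r + 1))),
        hσ (r + 1)]) (hσ r)).trans_eq (by ring)
  have h₀ : (σ 0 : ℝ) - W ≤ k := by
    have hg0 : g (min ((0 : ℕ) : ℝ) ℓ) = c 0 := by
      simpa [min_eq_left (show (0 : ℝ) ≤ ℓ from dist_nonneg)] using hg.1
    have h := hc.abs_sub_le_of_dist_le hA (hσN 0) N.zero_le (hg0 ▸ hσ 0) (dist_self (c 0)).le
    push_cast at h
    linarith [(abs_le.mp h).2, k.cast_nonneg (α := ℝ)]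
  have hR : (k : ℝ) ≤ σ ⌈ℓ⌉₊ + W := by
    have hgR : g (min (⌈ℓ⌉₊ : ℝ) ℓ) = c N := by rw [min_eq_right (Nat.le_ceil ℓ)]; exact hg.2.1
    have h := hc.abs_sub_le_of_dist_le hA (hσN ⌈ℓ⌉₊) le_rfl (hgR ▸ hσ ⌈ℓ⌉₊) (dist_self (c N)).le
    linarith [(abs_le.mp h).1, (Nat.cast_le (α := ℝ)).mpr hk]
  obtain ⟨r, -, hr⟩ := exists_abs_sub_le_of_abs_sub_succ_le (fun r => (σ r : ℝ)) hstep h₀ hR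
  exact ⟨_, hmem r, σ r, hσN r, hσ r, hr⟩

theorem ThinTriangles.infDist_isDiscreteQuasiGeodesic_le (hgeo : GeodesicSpace Y)
    (hthin : ThinTriangles Y δ) (hδ : 0 ≤ δ) (hK : 0 < K) (hA : 0 ≤ A)
    (hc : IsDiscreteQuasiGeodesic K A B N c) (hg : IsGeodesicSegment g (c 0) (c N)) {k : ℕ}
    (hk : k ≤ N) :
    infDist (c k) (g '' Icc 0 (dist (c 0) (c N))) ≤
      K * (A * (2 * coarseMorseBound δ K A B + 1) + B) + coarseMorseBound δ K A B := by
  obtain ⟨u, hu, i, hi, hui, hik⟩ := hthin.exists_index_near hgeo hδ hK hA hc hg hk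
  calc infDist (c k) (g '' Icc 0 (dist (c 0) (c N))) ≤ dist (c k) (g u) :=
        infDist_le_dist_of_mem (mem_image_of_mem g hu)
    _ ≤ dist (c k) (c i) + dist (c i) (g u) := dist_triangle ..
    _ ≤ K * (A * (2 * coarseMorseBound δ K A B + 1) + B) + coarseMorseBound δ K A B := by
      gcongr
      · exact (hc.1.dist_le hk hi).trans (by rw [abs_sub_comm]; gcongr)
      · rwa [dist_comm]

end DiscreteMorse

def IsQuasiIsometricEmbedding {X : Type*} [MetricSpace X] (lam S : ℝ) (f : X → Y) : Prop :=
  ∀ x x' : X, lam⁻¹ * dist x x' - S ≤ dist (f x) (f x') ∧ dist (f x) (f x') ≤ lam * dist x x' + S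

noncomputable def morseBound (δ lam S : ℝ) : ℝ :=
  (lam + S) * (lam * (2 * coarseMorseBound δ (lam + S) lam (lam * S + 1) + 1) + lam * S + 2) +
    coarseMorseBound δ (lam + S) lam (lam * S + 1)

namespace IsQuasiIsometricEmbedding

variable {X : Type*} [MetricSpace X] {lam S : ℝ} {f : X → Y}

theorem dist_le_mul_add (hf : IsQuasiIsometricEmbedding lam S f) (hlam : 0 < lam) (x x' : X) :
    dist x x' ≤ lam * (dist (f x) (f x') + S) :=
  (inv_mul_le_iff₀ hlam).mp (by linarith [(hf x x').1])

theorem infDist_le_mul_infDist_image (hf : IsQuasiIsometricEmbedding lam S f) (hlam : 0 < lam)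
    {P : Set X} (hP : P.Nonempty) (x : X) : infDist x P ≤ lam * (infDist (f x) (f '' P) + S) := by
  have h : infDist x P / lam - S ≤ infDist (f x) (f '' P) := by
    refine (le_infDist (hP.image f)).mpr ?_
    rintro _ ⟨p, hp, rfl⟩
    have := (div_le_iff₀' hlam).mpr
      ((infDist_le_dist_of_mem hp).trans (hf.dist_le_mul_add hlam x p))
    linarith
  exact (div_le_iff₀' hlam).mp (by linarith)

theorem exists_isDiscreteQuasiGeodesic (hf : IsQuasiIsometricEmbedding lam S f) (hlam : 1 ≤ lam)
    {γ : ℝ → X} {a b : X} (hγ : IsGeodesicSegment γ a b) :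
    ∃ N c, IsDiscreteQuasiGeodesic (lam + S) lam (lam * S + 1) N c ∧ c 0 = f a ∧ c N = f b ∧
      c '' Iic N ⊆ f '' (γ '' Icc 0 (dist a b)) ∧
      ∀ s ∈ Icc 0 (dist a b), ∃ k ≤ N, dist (f (γ s)) (c k) ≤ lam + S := by
  set L := dist a b
  have hL : 0 ≤ L := dist_nonneg
  have hmem : ∀ k : ℕ, min (k : ℝ) L ∈ Icc 0 L := fun k =>
    ⟨le_min k.cast_nonneg hL, min_le_right _ _⟩
  have hmin : ∀ k ≤ ⌈L⌉₊, (k : ℝ) - 1 ≤ min (k : ℝ) L := fun k hk =>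
    le_min (by linarith) (by linarith [Nat.ceil_lt_add_one hL, (Nat.cast_le (α := ℝ)).mpr hk])
  refine ⟨⌈L⌉₊, fun k => f (γ (min k L)), ⟨fun k _ => ?_, fun i hi j hj => ?_⟩,
    by simp [min_eq_left hL, hγ.1], by simp [min_eq_right (Nat.le_ceil L), L, hγ.2.1],
    fun _ ⟨k, _, hk⟩ => hk ▸ mem_image_of_mem f (mem_image_of_mem γ (hmem k)),
    fun s hs => ⟨⌊s⌋₊, (Nat.floor_mono hs.2).trans (Nat.floor_le_ceil L), ?_⟩⟩
  · calc dist (f (γ (min k L))) (f (γ (min ((k + 1 : ℕ) : ℝ) L)))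
        ≤ lam * |min (k : ℝ) L - min ((k + 1 : ℕ) : ℝ) L| + S := by
          rw [← hγ.2.2 _ (hmem k) _ (hmem (k + 1))]; exact (hf _ _).2
      _ ≤ lam * 1 + S := by
          gcongr
          exact (abs_min_sub_min_le_max _ _ _ _).trans (by simp)
      _ = lam + S := by ring
  · have hi' := hmin i hi
    have hj' := hmin j hj
    have hij : |(i : ℝ) - j| ≤ |min (i : ℝ) L - min (j : ℝ) L| + 1 := by
      rw [abs_le]
      constructor <;> linarith [le_abs_self (min (i : ℝ) L - min (j : ℝ) L),
        neg_abs_le (min (i : ℝ) L - min (j : ℝ) L), min_le_left (i : ℝ) L, min_le_left (j : ℝ) L]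
    rw [← hγ.2.2 _ (hmem i) _ (hmem j)] at hij
    linarith [hf.dist_le_mul_add (by linarith) (γ (min i L)) (γ (min j L))]
  · have hsL : (⌊s⌋₊ : ℝ) ≤ L := (Nat.floor_le hs.1).trans hs.2
    calc dist (f (γ s)) (f (γ (min ⌊s⌋₊ L))) ≤ lam * |s - ⌊s⌋₊| + S := by
          rw [min_eq_left hsL, ← hγ.2.2 _ hs _ ⟨Nat.cast_nonneg _, hsL⟩]; exact (hf _ _).2
      _ ≤ lam * 1 + S := by
          gcongr
          rw [abs_of_nonneg (by linarith [Nat.floor_le hs.1])]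
          linarith [Nat.lt_floor_add_one s]
      _ = lam + S := by ring

variable {δ : ℝ} {g : ℝ → Y}

theorem infDist_geodesic_le_morseBound (hgeo : GeodesicSpace Y) (hthin : ThinTriangles Y δ)
    (hδ : 0 ≤ δ) (hlam : 1 ≤ lam) (hS : 0 ≤ S) (hf : IsQuasiIsometricEmbedding lam S f)
    {γ : ℝ → X} {a b : X} (hγ : IsGeodesicSegment γ a b) (hg : IsGeodesicSegment g (f a) (f b))
    {u : ℝ} (hu : u ∈ Icc 0 (dist (f a) (f b))) :
    infDist (g u) (f '' (γ '' Icc 0 (dist a b))) ≤ morseBound δ lam S := by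
  obtain ⟨N, c, hc, hc0, hcN, hsub, -⟩ := hf.exists_isDiscreteQuasiGeodesic hlam hγ
  rw [← hc0, ← hcN] at hg hu
  have hD := hthin.infDist_le_coarseMorseBound hgeo hδ (by linarith) (by linarith) hc hg hu
  have hD₀ := infDist_nonneg.trans hD
  calc _ ≤ infDist (g u) (c '' Iic N) := infDist_le_infDist_of_subset hsub ⟨c 0, 0, by simp, rfl⟩
    _ ≤ coarseMorseBound δ (lam + S) lam (lam * S + 1) := hD
    _ ≤ morseBound δ lam S :=
      le_add_of_nonneg_left (by unfold coarseMorseBound at hD₀ ⊢; positivity)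

theorem infDist_image_le_morseBound (hgeo : GeodesicSpace Y) (hthin : ThinTriangles Y δ)
    (hδ : 0 ≤ δ) (hlam : 1 ≤ lam) (hS : 0 ≤ S) (hf : IsQuasiIsometricEmbedding lam S f)
    {γ : ℝ → X} {a b : X} (hγ : IsGeodesicSegment γ a b) (hg : IsGeodesicSegment g (f a) (f b))
    {s : ℝ} (hs : s ∈ Icc 0 (dist a b)) :
    infDist (f (γ s)) (g '' Icc 0 (dist (f a) (f b))) ≤ morseBound δ lam S := by
  obtain ⟨N, c, hc, hc0, hcN, -, hnear⟩ := hf.exists_isDiscreteQuasiGeodesic hlam hγ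
  obtain ⟨k, hk, hsk⟩ := hnear s hs
  rw [← hc0, ← hcN] at hg ⊢
  calc _ ≤ infDist (c k) (g '' Icc 0 (dist (c 0) (c N))) + dist (f (γ s)) (c k) :=
        infDist_le_infDist_add_dist
    _ ≤ (lam + S) * (lam * (2 * coarseMorseBound δ (lam + S) lam (lam * S + 1) + 1) +
          (lam * S + 1)) + coarseMorseBound δ (lam + S) lam (lam * S + 1) + (lam + S) :=
        add_le_add (hthin.infDist_isDiscreteQuasiGeodesic_le hgeo hδ (by linarith) (by linarith)
          hc hg hk) hsk
    _ = morseBound δ lam S := by unfold morseBound; ring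

theorem infDist_side_le (hgeo : GeodesicSpace Y) (hthin : ThinTriangles Y δ) (hδ : 0 ≤ δ)
    (hlam : 1 ≤ lam) (hS : 0 ≤ S) (hf : IsQuasiIsometricEmbedding lam S f) {a b c : X}
    {γab γbc γca : ℝ → X} (hab : IsGeodesicSegment γab a b) (hbc : IsGeodesicSegment γbc b c)
    (hca : IsGeodesicSegment γca c a) {s : ℝ} (hs : s ∈ Icc 0 (dist a b)) :
    infDist (γab s) (γbc '' Icc 0 (dist b c) ∪ γca '' Icc 0 (dist c a)) ≤
      lam * (2 * morseBound δ lam S + δ + S) := by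
  set H := morseBound δ lam S
  set P := γbc '' Icc 0 (dist b c) ∪ γca '' Icc 0 (dist c a)
  obtain ⟨gab, hgab⟩ := hgeo (f a) (f b)
  obtain ⟨gbc, hgbc⟩ := hgeo (f b) (f c)
  obtain ⟨gca, hgca⟩ := hgeo (f c) (f a)
  have hfP : ∀ w ∈ gbc '' Icc 0 (dist (f b) (f c)) ∪ gca '' Icc 0 (dist (f c) (f a)),
      infDist w (f '' P) ≤ H := by
    rintro _ (⟨v, hv, rfl⟩ | ⟨v, hv, rfl⟩)
    · refine (infDist_le_infDist_of_subset (image_mono subset_union_left)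
        ((nonempty_image_Icc_dist _ _ _).image f)).trans ?_
      exact hf.infDist_geodesic_le_morseBound hgeo hthin hδ hlam hS hbc hgbc hv
    · refine (infDist_le_infDist_of_subset (image_mono subset_union_right)
        ((nonempty_image_Icc_dist _ _ _).image f)).trans ?_
      exact hf.infDist_geodesic_le_morseBound hgeo hthin hδ hlam hS hca hgca hv
  have hY : infDist (f (γab s)) (f '' P) ≤ H + (δ + H) := by
    refine infDist_le_add_of_forall_infDist_le (nonempty_image_Icc_dist _ _ _)
      (hf.infDist_image_le_morseBound hgeo hthin hδ hlam hS hab hgab hs) ?_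
    rintro _ ⟨u, hu, rfl⟩
    exact infDist_le_add_of_forall_infDist_le
      ((nonempty_image_Icc_dist _ _ _).mono subset_union_left)
      ((hthin _ _ _ _ _ _ hgab hgbc hgca).1 u hu) hfP
  calc infDist (γab s) P ≤ lam * (infDist (f (γab s)) (f '' P) + S) :=
        hf.infDist_le_mul_infDist_image (by linarith)
          ((nonempty_image_Icc_dist _ _ _).mono subset_union_left) _
    _ ≤ lam * (H + (δ + H) + S) := by gcongr
    _ = lam * (2 * H + δ + S) := by ring

end IsQuasiIsometricEmbedding

end

universe u v

/-- **Quasi-isometry invariance of Gromov hyperbolicity.** If `Y` is a `δ`-thin-hyperbolic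
geodesic metric space, `X` is a geodesic metric space, and `f : X → Y` is a
`(λ, S)`-quasi-isometric embedding (`λ ≥ 1`, `S ≥ 0`), then `X` is `δ'`-thin-hyperbolic
for some `δ' ≥ 0` depending only on `δ`, `λ` and `S`. -/
theorem hyperbolicity_invariant_under_quasi_isometry (δ lam S : ℝ)
    (hδ : 0 ≤ δ) (hlam : 1 ≤ lam) (hS : 0 ≤ S) :
    ∃ δ' : ℝ, 0 ≤ δ' ∧
      ∀ (X : Type u) (Y : Type v) [instX : MetricSpace X] [instY : MetricSpace Y],
        GeodesicSpace X → GeodesicSpace Y → ThinTriangles Y δ →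
        ∀ f : X → Y,
          (∀ x x' : X, lam⁻¹ * dist x x' - S ≤ dist (f x) (f x') ∧
            dist (f x) (f x') ≤ lam * dist x x' + S) →
          ThinTriangles X δ' := by
  refine ⟨lam * (2 * morseBound δ lam S + δ + S), by unfold morseBound coarseMorseBound; positivity,
    fun X Y _ _ _ hgeo hthin f hf a b c γab γbc γca hab hbc hca => ?_⟩
  have hf : IsQuasiIsometricEmbedding lam S f := hf
  refine ⟨fun s hs => hf.infDist_side_le hgeo hthin hδ hlam hS hab hbc hca hs, fun s hs => ?_,
    fun s hs => hf.infDist_side_le hgeo hthin hδ hlam hS hca hab hbc hs⟩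
  rw [union_comm]
  exact hf.infDist_side_le hgeo hthin hδ hlam hS hbc hca hab hs
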